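/- Let h ≥ 0 and let S be a string over the alphabet of bit-vectors of length h. Define the wavelet tree select procedure Sel by: Sel(0, S, a, j) = j − 1; Sel(h+1, S, a, j) = select_{head a}(map head S, Sel(h, map tail (filter (fun x => head x = head a) S), tail a, j) + 1). Then for every symbol a (a bit-vector of length h) and every 1 ≤ j ≤ (number of occurrences of a in S), Sel(h, S, a, j) = select_a(S, j). That is, the full multi-level bottom-up traversal of the wavelet tree correctly answers select queries. -/

import Mathlib

/-- `select a S j` = 0-based position in `S` of the `j`-th occurrence
(`j ≥ 1`) of symbol `a`. -/
def select {α : Type*} [DecidableEq α] (a : α) (S : List α) (j : ℕ) : ℕ :=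
  ((List.range S.length).filter (fun e => decide (S[e]? = some a))).getD (j - 1) 0

/-- The wavelet tree select procedure on a string of bit-vectors (lists of
Booleans) of length `h`: `Sel 0 S a j = j − 1`, and
`Sel (h+1) S a j = select_{head a} (map head S)
(Sel h (map tail (filter (head · = head a) S)) (tail a) j + 1)`. -/
def wtSel : ℕ → List (List Bool) → List Bool → ℕ → ℕ
  | 0, _, _, j => j - 1
  | h + 1, S, a, j =>
      select a.headI (S.map List.headI)
        (wtSel h ((S.filter (fun x => x.headI == a.headI)).map List.tail) a.tail j + 1)

def posL {α : Type*} [DecidableEq α] (a : α) (S : List α) : List ℕ :=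
  (List.range S.length).filter (fun e => decide (S[e]? = some a))

lemma select_eq_posL {α : Type*} [DecidableEq α] (a : α) (S : List α) (j : ℕ) :
    select a S j = (posL a S).getD (j - 1) 0 := rfl

lemma posL_cons {α : Type*} [DecidableEq α] (a x : α) (S : List α) :
    posL a (x :: S) = (if x = a then [0] else []) ++ (posL a S).map (· + 1) := by
  unfold posL
  rw [List.length_cons, List.range_succ_eq_map, List.filter_cons]
  simp only [List.getElem?_cons_zero, List.filter_map]
  have : (fun e => decide ((x :: S)[e]? = some a)) ∘ Nat.succ
      = fun e => decide (S[e]? = some a) := by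
    funext e; simp
  rw [this]
  by_cases hx : x = a <;> simp [hx, Function.comp]

lemma posL_length {α : Type*} [BEq α] [LawfulBEq α] [DecidableEq α] (a : α) (S : List α) :
    (posL a S).length = S.count a := by
  induction S with
  | nil => simp [posL]
  | cons x S ih =>
    rw [posL_cons, List.count_cons]
    by_cases hx : x = a <;> simp [hx, ih]

lemma posL_mem_lt {α : Type*} [DecidableEq α] {a : α} {S : List α} {k : ℕ}
    (hk : k ∈ posL a S) : k < S.length := by
  unfold posL at hk
  simp only [List.mem_filter, List.mem_range] at hk
  exact hk.1

lemma select_lt_length {α : Type*} [BEq α] [LawfulBEq α] [DecidableEq α] {a : α} {S : List α} {j : ℕ}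
    (h1 : 1 ≤ j) (h2 : j ≤ S.count a) : select a S j < S.length := by
  have hlt : j - 1 < (posL a S).length := by rw [posL_length]; omega
  rw [select_eq_posL, List.getD_eq_getElem _ _ hlt]
  exact posL_mem_lt (List.getElem_mem hlt)

lemma select_cons_self_one {α : Type*} [DecidableEq α] (a : α) (S : List α) :
    select a (a :: S) 1 = 0 := by
  rw [select_eq_posL, posL_cons]
  simp

lemma select_cons_self {α : Type*} [BEq α] [LawfulBEq α] [DecidableEq α] {a : α} {S : List α} {j : ℕ}
    (h1 : 2 ≤ j) (h2 : j - 1 ≤ S.count a) :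
    select a (a :: S) j = select a S (j - 1) + 1 := by
  rw [select_eq_posL, select_eq_posL, posL_cons]
  have hlt : j - 2 < (posL a S).length := by rw [posL_length]; omega
  have hlt' : j - 2 < ((posL a S).map (· + 1)).length := by simpa using hlt
  have h0 : j - 1 = (j - 2) + 1 := by omega
  rw [if_pos rfl, List.singleton_append, h0, List.getD_cons_succ,
    Nat.add_sub_cancel, List.getD_eq_getElem _ _ hlt',
    List.getD_eq_getElem _ _ hlt, List.getElem_map]

lemma select_cons_ne {α : Type*} [BEq α] [LawfulBEq α] [DecidableEq α] {a x : α} {S : List α} {j : ℕ}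
    (hx : x ≠ a) (h1 : 1 ≤ j) (h2 : j ≤ S.count a) :
    select a (x :: S) j = select a S j + 1 := by
  rw [select_eq_posL, select_eq_posL, posL_cons, if_neg hx, List.nil_append]
  have hlt : j - 1 < (posL a S).length := by rw [posL_length]; omega
  have hlt' : j - 1 < ((posL a S).map (· + 1)).length := by simpa using hlt
  rw [List.getD_eq_getElem _ _ hlt', List.getD_eq_getElem _ _ hlt, List.getElem_map]

lemma select_all_eq {α : Type*} [DecidableEq α] {a : α} {S : List α} {j : ℕ}
    (hall : ∀ x ∈ S, x = a) (h1 : 1 ≤ j) (h2 : j ≤ S.length) :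
    select a S j = j - 1 := by
  have hpos : posL a S = List.range S.length := by
    unfold posL
    apply List.filter_eq_self.2
    intro e he
    simp only [List.mem_range] at he
    simp [List.getElem?_eq_getElem he, hall _ (List.getElem_mem he)]
  rw [select_eq_posL, hpos, List.getD_eq_getElem _ _ (by simpa using by omega : j - 1 < (List.range S.length).length), List.getElem_range]

lemma eq_of_headI_tail {x a : List Bool} (hx : x ≠ []) (ha : a ≠ [])
    (h1 : x.headI = a.headI) (h2 : x.tail = a.tail) : x = a := by
  cases x with
  | nil => exact absurd rfl hx
  | cons xh xt =>
    cases a with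
    | nil => exact absurd rfl ha
    | cons ah at' => simp_all

lemma count_filter_tail {a : List Bool} (ha : a ≠ []) :
    ∀ S : List (List Bool), (∀ x ∈ S, x ≠ []) →
    ((S.filter (fun x => x.headI == a.headI)).map List.tail).count a.tail = S.count a := by
  intro S
  induction S with
  | nil => simp
  | cons x S ih =>
    intro hne
    have hx : x ≠ [] := hne x List.mem_cons_self
    have ihS := ih (fun y hy => hne y (List.mem_cons_of_mem x hy))
    by_cases hh : x.headI = a.headI
    · rw [List.filter_cons_of_pos (by simpa using hh), List.map_cons]
      by_cases ht : x.tail = a.tail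
      · have hxa : x = a := eq_of_headI_tail hx ha hh ht
        rw [List.count_cons, List.count_cons]
        simp [ht, hxa, ihS]
      · have hxa : x ≠ a := fun h => ht (by rw [h])
        rw [List.count_cons, List.count_cons]
        simp [ht, hxa, ihS]
    · rw [List.filter_cons_of_neg (by simpa using hh)]
      have hxa : x ≠ a := fun h => hh (by rw [h])
      rw [List.count_cons]
      simp [hxa, ihS]

lemma count_headI_map {a : List Bool} :
    ∀ S : List (List Bool),
    (S.map List.headI).count a.headI
      = ((S.filter (fun x => x.headI == a.headI)).map List.tail).length := by
  intro S
  induction S with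
  | nil => simp
  | cons x S ih =>
    by_cases hh : x.headI = a.headI
    · rw [List.map_cons, List.count_cons, List.filter_cons_of_pos (by simpa using hh)]
      simp [hh, ih]
    · rw [List.map_cons, List.count_cons, List.filter_cons_of_neg (by simpa using hh)]
      simp [hh, ih]

lemma step_lemma {a : List Bool} (ha : a ≠ []) :
    ∀ S : List (List Bool), (∀ x ∈ S, x ≠ []) → ∀ j, 1 ≤ j → j ≤ S.count a →
    select a.headI (S.map List.headI)
      (select a.tail ((S.filter (fun x => x.headI == a.headI)).map List.tail) j + 1)
      = select a S j := by
  intro S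
  induction S with
  | nil => intro _ j h1 h2; simp at h2; omega
  | cons x S ih =>
    intro hne j h1 h2
    have hx : x ≠ [] := hne x List.mem_cons_self
    have hneS : ∀ y ∈ S, y ≠ [] := fun y hy => hne y (List.mem_cons_of_mem x hy)
    have hcnt : ((S.filter (fun x => x.headI == a.headI)).map List.tail).count a.tail
        = S.count a := count_filter_tail ha S hneS
    have hcntL : (S.map List.headI).count a.headI
        = ((S.filter (fun x => x.headI == a.headI)).map List.tail).length :=
      count_headI_map S
    set F := (S.filter (fun x => x.headI == a.headI)).map List.tail with hF
    by_cases hxa : x = a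
    · subst hxa
      rw [List.filter_cons_of_pos (by simp), List.map_cons, List.map_cons]
      rcases Nat.lt_or_ge j 2 with hj | hj
      · have hj1 : j = 1 := by omega
        subst hj1
        rw [select_cons_self_one, select_cons_self_one, select_cons_self_one]
      · have h2' : j - 1 ≤ S.count x := by
          rw [List.count_cons] at h2; simp at h2; omega
        have hin : select x.tail (x.tail :: F) j = select x.tail F (j - 1) + 1 :=
          select_cons_self hj (by rw [hcnt]; exact h2')
        rw [hin]
        have hsel_lt : select x.tail F (j - 1) < F.length :=
          select_lt_length (by omega) (by rw [hcnt]; exact h2')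
        have hout : select x.headI (x.headI :: S.map List.headI)
            (select x.tail F (j - 1) + 1 + 1)
            = select x.headI (S.map List.headI) (select x.tail F (j - 1) + 1) + 1 := by
          have := select_cons_self (a := x.headI) (S := S.map List.headI)
            (j := select x.tail F (j - 1) + 1 + 1) (by omega)
            (by rw [hcntL]; omega)
          simpa using this
        rw [hout, ih hneS (j - 1) (by omega) h2']
        exact (select_cons_self hj h2').symm
    · have h2' : j ≤ S.count a := by
        rw [List.count_cons] at h2
        simp only [beq_iff_eq, if_neg hxa] at h2; omega
      by_cases hh : x.headI = a.headI
      · have ht : x.tail ≠ a.tail := fun h' => hxa (eq_of_headI_tail hx ha hh h')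
        rw [List.filter_cons_of_pos (by simpa using hh), List.map_cons, List.map_cons]
        have hin : select a.tail (x.tail :: F) j = select a.tail F j + 1 :=
          select_cons_ne ht h1 (by rw [hcnt]; exact h2')
        rw [hin]
        have hsel_lt : select a.tail F j < F.length :=
          select_lt_length h1 (by rw [hcnt]; exact h2')
        rw [hh]
        have hout : select a.headI (a.headI :: S.map List.headI)
            (select a.tail F j + 1 + 1)
            = select a.headI (S.map List.headI) (select a.tail F j + 1) + 1 := by
          have := select_cons_self (a := a.headI) (S := S.map List.headI)
            (j := select a.tail F j + 1 + 1) (by omega) (by rw [hcntL]; omega)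
          simpa using this
        rw [hout, ih hneS j h1 h2']
        exact (select_cons_ne hxa h1 h2').symm
      · rw [List.filter_cons_of_neg (by simpa using hh), List.map_cons]
        have hsel_lt : select a.tail F j < F.length :=
          select_lt_length h1 (by rw [hcnt]; exact h2')
        have hout : select a.headI (x.headI :: S.map List.headI)
            (select a.tail F j + 1)
            = select a.headI (S.map List.headI) (select a.tail F j + 1) + 1 :=
          select_cons_ne (fun h' => hh h') (by omega) (by rw [hcntL]; omega)
        rw [hout, ih hneS j h1 h2']
        exact (select_cons_ne hxa h1 h2').symm

/-- The full multi-level bottom-up traversal of the wavelet tree correctly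
answers select queries: if every symbol of `S` and the query symbol `a` are
bit-vectors of length `h`, then `Sel h S a j = select_a(S, j)` for every
`1 ≤ j ≤ (number of occurrences of a in S)`. -/
theorem stmt17 (h : ℕ) (S : List (List Bool)) (a : List Bool)
    (hlen : ∀ x ∈ S, x.length = h) (ha : a.length = h)
    (j : ℕ) (hj1 : 1 ≤ j) (hj2 : j ≤ S.count a) :
    wtSel h S a j = select a S j := by
  induction h generalizing S a j with
  | zero =>
    have ha0 : a = [] := List.length_eq_zero_iff.mp ha
    have hall : ∀ x ∈ S, x = a := fun x hx => by
      rw [ha0]; exact List.length_eq_zero_iff.mp (hlen x hx)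
    have hj2' : j ≤ S.length := le_trans hj2 List.count_le_length
    rw [show wtSel 0 S a j = j - 1 from rfl, select_all_eq hall hj1 hj2']
  | succ h ih =>
    have ha' : a ≠ [] := by
      intro h'; rw [h'] at ha; simp at ha
    have hne : ∀ x ∈ S, x ≠ [] := fun x hx h' => by
      have := hlen x hx; rw [h'] at this; simp at this
    have hcnt : ((S.filter (fun x => x.headI == a.headI)).map List.tail).count a.tail
        = S.count a := count_filter_tail ha' S hne
    show select a.headI (S.map List.headI)
        (wtSel h ((S.filter (fun x => x.headI == a.headI)).map List.tail) a.tail j + 1)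
        = select a S j
    rw [ih ((S.filter (fun x => x.headI == a.headI)).map List.tail) a.tail
      (by
        intro y hy
        simp only [List.mem_map, List.mem_filter] at hy
        obtain ⟨z, ⟨hz, _⟩, rfl⟩ := hy
        have := hlen z hz
        cases z with
        | nil => simp at this
        | cons zh zt => simpa using this)
      (by
        cases a with
        | nil => exact absurd rfl ha'
        | cons ah at' => simpa using ha)
      j hj1 (by rw [hcnt]; exact hj2)]
    exact step_lemma ha' S hne j hj1 hj2
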